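/- arXiv:1803.05501 — 9 statements merged into one kernel-verified Lean document; each statement's English description precedes it below -/
import Mathlib

section
/- In any d-regular bipartite graph with n vertices on each side (d ≥ 1), every maximal matching has size at least (d/(2d-1))·n. -/
/-- `M` is a matching in the bipartite graph with edge predicate `E`. -/
def IsMatching {U V : Type*} (E : U → V → Bool) (M : Finset (U × V)) : Prop :=
  (∀ p ∈ M, E p.1 p.2 = true) ∧
  (∀ p ∈ M, ∀ q ∈ M, p.1 = q.1 → p = q) ∧
  (∀ p ∈ M, ∀ q ∈ M, p.2 = q.2 → p = q)

/-- `M` is a maximal matching: no edge can be added. -/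
def IsMaximalMatching {U V : Type*} (E : U → V → Bool) (M : Finset (U × V)) : Prop :=
  IsMatching E M ∧
  ∀ u v, E u v = true → (∃ p ∈ M, p.1 = u) ∨ (∃ p ∈ M, p.2 = v)

/-!
Count the `d * n` edges by their matched endpoints. By maximality every edge has an endpoint
covered by `M`, so the edges at the `|M|` matched vertices on the left, together with those at
the `|M|` matched vertices on the right, cover all of them; the edges of `M` are counted on both
sides. Hence `d * n + |M| ≤ 2 * d * |M|`.
-/

open Finset

section Bipartite

variable {U V : Type*} [Fintype U] [Fintype V] (E : U → V → Bool)

def bipartiteEdges : Finset (U × V) := {p | E p.1 p.2}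

lemma card_bipartiteEdges_filter_fst_eq [DecidableEq U] (u : U) :
    #{p ∈ bipartiteEdges E | p.1 = u} = #{v | E u v} := by
  symm
  refine card_nbij (Prod.mk u) ?_ (fun _ _ _ _ => congrArg Prod.snd) ?_
  · intro v hv
    simpa [bipartiteEdges] using hv
  · rintro ⟨u', v⟩ hp
    simp only [bipartiteEdges, coe_filter, mem_filter, mem_univ, true_and, Set.mem_ofPred_eq] at hp
    obtain ⟨he, rfl⟩ := hp
    exact ⟨v, by simpa using he, rfl⟩

lemma card_bipartiteEdges_filter_snd_eq [DecidableEq V] (v : V) :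
    #{p ∈ bipartiteEdges E | p.2 = v} = #{u | E u v} := by
  symm
  refine card_nbij (fun u => (u, v)) ?_ (fun _ _ _ _ => congrArg Prod.fst) ?_
  · intro u hu
    simpa [bipartiteEdges] using hu
  · rintro ⟨u, v'⟩ hp
    simp only [bipartiteEdges, coe_filter, mem_filter, mem_univ, true_and, Set.mem_ofPred_eq] at hp
    obtain ⟨he, rfl⟩ := hp
    exact ⟨u, by simpa using he, rfl⟩

lemma card_bipartiteEdges_filter_fst_mem [DecidableEq U] (A : Finset U) :
    #{p ∈ bipartiteEdges E | p.1 ∈ A} = ∑ u ∈ A, #{v | E u v} := by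
  simp only [← sum_card_fiberwise_eq_card_filter, card_bipartiteEdges_filter_fst_eq]

lemma card_bipartiteEdges_filter_snd_mem [DecidableEq V] (B : Finset V) :
    #{p ∈ bipartiteEdges E | p.2 ∈ B} = ∑ v ∈ B, #{u | E u v} := by
  simp only [← sum_card_fiberwise_eq_card_filter, card_bipartiteEdges_filter_snd_eq]

lemma card_bipartiteEdges [DecidableEq U] :
    #(bipartiteEdges E) = ∑ u, #{v | E u v} := by
  rw [← card_bipartiteEdges_filter_fst_mem, filter_true_of_mem fun _ _ => mem_univ _]

end Bipartite

section Matching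

variable {U V : Type*} {E : U → V → Bool} {M : Finset (U × V)}

lemma IsMatching.card_image_fst [DecidableEq U] (hM : IsMatching E M) :
    #(M.image Prod.fst) = #M :=
  card_image_of_injOn hM.2.1

lemma IsMatching.card_image_snd [DecidableEq V] (hM : IsMatching E M) :
    #(M.image Prod.snd) = #M :=
  card_image_of_injOn hM.2.2

variable [Fintype U] [Fintype V] [DecidableEq U] [DecidableEq V]

lemma IsMatching.subset_inter (hM : IsMatching E M) :
    M ⊆ {p ∈ bipartiteEdges E | p.1 ∈ M.image Prod.fst} ∩
      {p ∈ bipartiteEdges E | p.2 ∈ M.image Prod.snd} := by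
  intro p hp
  have hpE : p ∈ bipartiteEdges E := by simpa [bipartiteEdges] using hM.1 p hp
  simp only [mem_inter, mem_filter]
  exact ⟨⟨hpE, mem_image_of_mem _ hp⟩, hpE, mem_image_of_mem _ hp⟩

lemma IsMaximalMatching.bipartiteEdges_subset_union (hM : IsMaximalMatching E M) :
    bipartiteEdges E ⊆ {p ∈ bipartiteEdges E | p.1 ∈ M.image Prod.fst} ∪
      {p ∈ bipartiteEdges E | p.2 ∈ M.image Prod.snd} := by
  intro p hp
  have hpE : E p.1 p.2 = true := by simpa [bipartiteEdges] using hp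
  simp only [mem_union, mem_filter, mem_image]
  exact (hM.2 p.1 p.2 hpE).imp (⟨hp, ·⟩) (⟨hp, ·⟩)

theorem IsMaximalMatching.card_bipartiteEdges_add_card_le (hM : IsMaximalMatching E M) :
    #(bipartiteEdges E) + #M ≤
      ∑ u ∈ M.image Prod.fst, #{v | E u v} + ∑ v ∈ M.image Prod.snd, #{u | E u v} := by
  rw [← card_bipartiteEdges_filter_fst_mem, ← card_bipartiteEdges_filter_snd_mem,
    ← card_union_add_card_inter {p ∈ bipartiteEdges E | p.1 ∈ M.image Prod.fst}]
  exact add_le_add (card_le_card hM.bipartiteEdges_subset_union)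
    (card_le_card hM.1.subset_inter)

end Matching

theorem maximal_matching_lower_bound_general (n d : ℕ)
    (E : Fin n → Fin n → Bool)
    (hdegU : ∀ u, (Finset.univ.filter (fun v => E u v = true)).card = d)
    (hdegV : ∀ v, (Finset.univ.filter (fun u => E u v = true)).card = d)
    (M : Finset (Fin n × Fin n)) (hM : IsMaximalMatching E M) :
    d * n ≤ (2 * d - 1) * M.card := by
  have hcount := hM.card_bipartiteEdges_add_card_le
  simp only [card_bipartiteEdges, hdegU, hdegV, sum_const, hM.1.card_image_fst,
    hM.1.card_image_snd, card_univ, Fintype.card_fin, smul_eq_mul] at hcount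
  rw [Nat.sub_mul, one_mul, two_mul, add_mul, mul_comm d n, mul_comm d]
  omega

/-- In a `d`-regular bipartite graph with `n` vertices on each side (`d ≥ 1`),
every maximal matching has size at least `(d/(2d-1))·n`. -/
theorem maximal_matching_lower_bound (n d : ℕ) (hd : 1 ≤ d)
    (E : Fin n → Fin n → Bool)
    (hdegU : ∀ u, (Finset.univ.filter (fun v => E u v = true)).card = d)
    (hdegV : ∀ v, (Finset.univ.filter (fun u => E u v = true)).card = d)
    (M : Finset (Fin n × Fin n)) (hM : IsMaximalMatching E M) :
    d * n ≤ (2 * d - 1) * M.card :=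
  maximal_matching_lower_bound_general n d E hdegU hdegV M hM
end

section
/- If M is a maximal matching in a d-regular bipartite graph G(U,V;E) with |U|=|V|=n, and S ⊆ U, T ⊆ V are the sets of unmatched vertices, then S ∪ T is an independent set in G and |S| = |T| ≤ ((d-1)/(2d-1))·n. -/
/-- If `M` is a maximal matching in a `d`-regular bipartite graph with `n` vertices
on each side, and `S ⊆ U`, `T ⊆ V` are the sets of unmatched vertices, then `S ∪ T`
is an independent set and `|S| = |T| ≤ ((d-1)/(2d-1))·n`. -/
theorem unmatched_sets_of_maximal_matching (n d : ℕ) (hd : 1 ≤ d)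
    (E : Fin n → Fin n → Bool)
    (hdegU : ∀ u, (Finset.univ.filter (fun v => E u v = true)).card = d)
    (hdegV : ∀ v, (Finset.univ.filter (fun u => E u v = true)).card = d)
    (M : Finset (Fin n × Fin n)) (hM : IsMaximalMatching E M)
    (S T : Finset (Fin n))
    (hS : S = Finset.univ.filter (fun u => ∀ p ∈ M, p.1 ≠ u))
    (hT : T = Finset.univ.filter (fun v => ∀ p ∈ M, p.2 ≠ v)) :
    (∀ u ∈ S, ∀ v ∈ T, E u v = false) ∧
    S.card = T.card ∧
    (2 * d - 1) * S.card ≤ (d - 1) * n := by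
  obtain ⟨⟨hE, hfst, hsnd⟩, hmax⟩ := hM
  have hSmem : ∀ u, u ∈ S ↔ ∀ p ∈ M, p.1 ≠ u := by
    intro u; rw [hS]; simp
  have hTmem : ∀ v, v ∈ T ↔ ∀ p ∈ M, p.2 ≠ v := by
    intro v; rw [hT]; simp
  -- independence
  have hind : ∀ u ∈ S, ∀ v ∈ T, E u v = false := by
    intro u hu v hv
    by_contra h
    have he : E u v = true := by simpa using h
    rcases hmax u v he with ⟨p, hp, h1⟩ | ⟨p, hp, h2⟩
    · exact (hSmem u).1 hu p hp h1
    · exact (hTmem v).1 hv p hp h2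
  set MU : Finset (Fin n) := M.image Prod.fst with hMUdef
  set MV : Finset (Fin n) := M.image Prod.snd with hMVdef
  have hMU : MU.card = M.card :=
    Finset.card_image_of_injOn (fun p hp q hq h => hfst p hp q hq h)
  have hMV : MV.card = M.card :=
    Finset.card_image_of_injOn (fun p hp q hq h => hsnd p hp q hq h)
  have hSU : S = Finset.univ \ MU := by
    ext u
    simp only [hSmem, Finset.mem_sdiff, Finset.mem_univ, true_and, hMUdef,
      Finset.mem_image, not_exists]
    tauto
  have hTV : T = Finset.univ \ MV := by
    ext v
    simp only [hTmem, Finset.mem_sdiff, Finset.mem_univ, true_and, hMVdef,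
      Finset.mem_image, not_exists]
    tauto
  have hScard : S.card = n - M.card := by
    rw [hSU, Finset.card_sdiff_of_subset (Finset.subset_univ _), Finset.card_univ,
      Fintype.card_fin, hMU]
  have hTcard : T.card = n - M.card := by
    rw [hTV, Finset.card_sdiff_of_subset (Finset.subset_univ _), Finset.card_univ,
      Fintype.card_fin, hMV]
  have hMn : M.card ≤ n := by
    have := Finset.card_le_univ MU
    rwa [hMU, Fintype.card_fin] at this
  refine ⟨hind, by rw [hScard, hTcard], ?_⟩
  -- edge counting: F = edges leaving S
  set F : Finset (Fin n × Fin n) :=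
    (S ×ˢ Finset.univ).filter (fun p => E p.1 p.2 = true) with hFdef
  have hF1 : ∀ p ∈ F, p.1 ∈ S := by
    intro p hp
    simp only [hFdef, Finset.mem_filter, Finset.mem_product] at hp
    exact hp.1.1
  have card1 : F.card = S.card * d := by
    rw [Finset.card_eq_sum_card_fiberwise hF1]
    rw [Finset.sum_congr rfl (fun u hu => ?_), Finset.sum_const, smul_eq_mul]
    show (F.filter (fun p => p.1 = u)).card = d
    have heq : F.filter (fun p => p.1 = u)
        = (Finset.univ.filter (fun v => E u v = true)).image (fun v => (u, v)) := by
      ext ⟨a, b⟩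
      simp only [hFdef, Finset.mem_filter, Finset.mem_product, Finset.mem_univ,
        Finset.mem_image, true_and, and_true]
      constructor
      · rintro ⟨⟨ha, he⟩, rfl⟩; exact ⟨b, he, rfl⟩
      · rintro ⟨v, he, hv⟩
        obtain ⟨rfl, rfl⟩ := Prod.mk.injEq .. ▸ hv
        exact ⟨⟨hu, he⟩, rfl⟩
    rw [heq, Finset.card_image_of_injective _ (fun x y h => by simpa using h), hdegU]
  -- each edge from S lands in MV
  have hF2 : ∀ p ∈ F, p.2 ∈ MV := by
    intro p hp
    simp only [hFdef, Finset.mem_filter, Finset.mem_product] at hp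
    rcases hmax p.1 p.2 hp.2 with ⟨q, hq, h1⟩ | ⟨q, hq, h2⟩
    · exact absurd h1 ((hSmem p.1).1 hp.1.1 q hq)
    · exact Finset.mem_image.2 ⟨q, hq, h2⟩
  have card2 : F.card ≤ M.card * (d - 1) := by
    rw [Finset.card_eq_sum_card_fiberwise hF2]
    calc ∑ v ∈ MV, (F.filter (fun p => p.2 = v)).card
        ≤ ∑ _v ∈ MV, (d - 1) := by
          refine Finset.sum_le_sum (fun v hv => ?_)
          obtain ⟨q, hq, hqv⟩ := Finset.mem_image.1 hv
          have hsub : F.filter (fun p => p.2 = v) ⊆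
              ((Finset.univ.filter (fun u => E u v = true)).erase q.1).image
                (fun u => (u, v)) := by
            intro ⟨a, b⟩ hab
            simp only [hFdef, Finset.mem_filter, Finset.mem_product] at hab
            obtain ⟨⟨⟨haS, _⟩, he⟩, rfl⟩ := hab
            refine Finset.mem_image.2 ⟨a, Finset.mem_erase.2 ⟨?_, ?_⟩, rfl⟩
            · intro h; exact (hSmem a).1 haS q hq (h ▸ rfl)
            · simp [he]
          calc (F.filter (fun p => p.2 = v)).card
              ≤ _ := Finset.card_le_card hsub
            _ ≤ ((Finset.univ.filter (fun u => E u v = true)).erase q.1).card :=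
                Finset.card_image_le
            _ = d - 1 := by
                rw [Finset.card_erase_of_mem, hdegV]
                simp only [Finset.mem_filter, Finset.mem_univ, true_and]
                rw [← hqv]; exact hE q hq
        _ = M.card * (d - 1) := by rw [Finset.sum_const, smul_eq_mul, hMV]
  have key : d * S.card ≤ (d - 1) * M.card := by
    rw [mul_comm d, mul_comm (d-1)]
    exact card1 ▸ card2
  have hn : n = M.card + S.card := by omega
  have h2d : 2 * d - 1 = d + (d - 1) := by omega
  calc (2 * d - 1) * S.card = d * S.card + (d - 1) * S.card := by
        rw [h2d, Nat.add_mul]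
    _ ≤ (d - 1) * M.card + (d - 1) * S.card := Nat.add_le_add_right key _
    _ = (d - 1) * n := by rw [← Nat.mul_add, ← hn]
end

section
/- There exists a d-regular bipartite graph with n = 2d-1 vertices on each side that admits a perfect matching and also admits a maximal matching of size exactly d (i.e., of size (d/(2d-1))·n). -/
open Finset

section Matching

variable {U V : Type*} [DecidableEq U] [DecidableEq V]

theorem isMatching_image_graph {E : U → V → Bool} {f : U → V} (hf : Function.Injective f)
    (s : Finset U) (hE : ∀ u ∈ s, E u (f u) = true) :
    IsMatching E (s.image fun u => (u, f u)) := by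
  simp only [IsMatching, mem_image, forall_exists_index, and_imp]
  refine ⟨?_, ?_, ?_⟩
  · rintro _ u hu rfl
    exact hE u hu
  · rintro _ u _ rfl _ w _ rfl (rfl : u = w)
    rfl
  · rintro _ u _ rfl _ w _ rfl (h : f u = f w)
    rw [hf h]

theorem card_image_graph (f : U → V) (s : Finset U) :
    #(s.image fun u => (u, f u)) = #s :=
  card_image_of_injective s fun _ _ h => congrArg Prod.fst h

end Matching

section CoreGraph

variable {α : Type*} [DecidableEq α]

def coreGraph (S : Finset α) (u v : α) : Bool :=
  decide (u ∈ S ∧ (v = u ∨ v ∉ S) ∨ u ∉ S ∧ v ∈ S)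

variable {S : Finset α}

theorem coreGraph_comm (u v : α) : coreGraph S u v = coreGraph S v u := by
  unfold coreGraph
  by_cases hu : u ∈ S <;> by_cases hv : v ∈ S <;> simp [hu, hv, eq_comm]

theorem isMaximalMatching_coreGraph_diag :
    IsMaximalMatching (coreGraph S) (S.image fun u => (u, u)) := by
  refine ⟨isMatching_image_graph Function.injective_id S fun u hu => by simp [coreGraph, hu], ?_⟩
  intro u v huv
  have hcover : u ∈ S ∨ v ∈ S := by
    unfold coreGraph at huv
    grind
  simp only [mem_image]
  rcases hcover with hu | hv
  · exact Or.inl ⟨(u, u), ⟨u, hu, rfl⟩, rfl⟩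
  · exact Or.inr ⟨(v, v), ⟨v, hv, rfl⟩, rfl⟩

variable [Fintype α]

theorem filter_coreGraph_of_mem {u : α} (hu : u ∈ S) :
    univ.filter (fun v => coreGraph S u v = true) = insert u Sᶜ := by
  ext v
  simp [coreGraph, hu]

theorem filter_coreGraph_of_notMem {u : α} (hu : u ∉ S) :
    univ.filter (fun v => coreGraph S u v = true) = S := by
  ext v
  simp [coreGraph, hu]

theorem card_filter_coreGraph (hS : S.Nonempty → #Sᶜ + 1 = #S) (u : α) :
    #(univ.filter fun v => coreGraph S u v = true) = #S := by
  by_cases hu : u ∈ S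
  · rw [filter_coreGraph_of_mem hu, card_insert_of_notMem (notMem_compl.2 hu), hS ⟨u, hu⟩]
  · rw [filter_coreGraph_of_notMem hu]

end CoreGraph

theorem coreGraph_rev {d : ℕ} (u : Fin (2 * d - 1)) :
    coreGraph (univ.filter fun i : Fin (2 * d - 1) => i < d) u u.rev = true := by
  have hu := u.isLt
  simp only [coreGraph, mem_filter, mem_univ, true_and, Fin.val_rev, Fin.ext_iff,
    decide_eq_true_eq]
  omega

theorem exists_regular_graph_with_small_maximal_matching_general (d : ℕ) :
    ∃ E : Fin (2 * d - 1) → Fin (2 * d - 1) → Bool,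
      (∀ u, (Finset.univ.filter (fun v => E u v = true)).card = d) ∧
      (∀ v, (Finset.univ.filter (fun u => E u v = true)).card = d) ∧
      (∃ M, IsMatching E M ∧ M.card = 2 * d - 1) ∧
      (∃ M, IsMaximalMatching E M ∧ M.card = d) := by
  set S := univ.filter fun i : Fin (2 * d - 1) => i < d
  have hS : #S = d := by
    rw [Fin.card_filter_val_lt]
    omega
  have hSc : S.Nonempty → #Sᶜ + 1 = #S := fun hne => by
    have := hne.card_pos
    rw [card_compl, Fintype.card_fin]
    omega
  have hdeg := card_filter_coreGraph hSc
  refine ⟨coreGraph S, fun u => (hdeg u).trans hS, fun v => ?_, ?_, ?_⟩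
  · simp_rw [coreGraph_comm _ v, hdeg, hS]
  · refine ⟨_, isMatching_image_graph Fin.rev_injective univ fun u _ => coreGraph_rev u, ?_⟩
    rw [card_image_graph, card_univ, Fintype.card_fin]
  · exact ⟨_, isMaximalMatching_coreGraph_diag, by rw [card_image_graph, hS]⟩

/-- There exists a `d`-regular bipartite graph with `n = 2d-1` vertices on each side
that admits a perfect matching (of size `2d-1`) and also admits a maximal matching
of size exactly `d`. -/
theorem exists_regular_graph_with_small_maximal_matching (d : ℕ) (hd : 1 ≤ d) :
    ∃ E : Fin (2 * d - 1) → Fin (2 * d - 1) → Bool,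
      (∀ u, (Finset.univ.filter (fun v => E u v = true)).card = d) ∧
      (∀ v, (Finset.univ.filter (fun u => E u v = true)).card = d) ∧
      (∃ M, IsMatching E M ∧ M.card = 2 * d - 1) ∧
      (∃ M, IsMaximalMatching E M ∧ M.card = d) :=
  exists_regular_graph_with_small_maximal_matching_general d
end

section
/- (Prefix matching) Fix a perfect matching M of bipartite graph G(U,V;E) and permutations σ, π. For any k, let V_[k] be the first k vertices of V under π and U_[k] their M-partners. If exactly ℓ vertices of V_[k] are matched by the greedy matching M[σ,π] to vertices in U \ U_[k], then at least ℓ + (k-ℓ)/2 vertices of V_[k] are matched in M[σ,π]. -/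
/-!
A vertex `v` of `V_[k]` left free by the greedy matching was still free when its partner
`μ v` arrived, so `μ v` took a vertex ranked no higher than `v`, hence inside `V_[k]`. Thus
the free vertices of `V_[k]` inject into the greedy edges from `U_[k]` to `V_[k]`, of which
there are `matched - ℓ`; so `k - matched ≤ matched - ℓ`.
-/

/-- Auxiliary greedy process: process the list of left vertices in order; each is
matched to its unmatched neighbor of lowest rank under `π` (if any). -/
def greedyAux {U V : Type*} [Fintype V] [DecidableEq V] {n : ℕ}
    (E : U → V → Bool) (π : V ≃ Fin n) :
    List U → Finset V → List (U × V)
  | [], _ => []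
  | u :: us, matched =>
    let cand := (Finset.univ.filter (fun v => E u v = true ∧ v ∉ matched)).image π
    if h : cand.Nonempty then
      (u, π.symm (cand.min' h)) :: greedyAux E π us (insert (π.symm (cand.min' h)) matched)
    else
      greedyAux E π us matched

/-- The greedy matching `M[σ,π]`: vertices of `U` arrive in the order given by `σ`,
each matched to its lowest-ranked (under `π`) yet-unmatched neighbor. -/
def greedy {U V : Type*} [Fintype V] [DecidableEq V] {m n : ℕ}
    (E : U → V → Bool) (σ : U ≃ Fin m) (π : V ≃ Fin n) : List (U × V) :=
  greedyAux E π ((List.finRange m).map σ.symm) ∅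

section Greedy

variable {U V : Type*} [Fintype V] [DecidableEq V] {m n : ℕ}
  (E : U → V → Bool) (π : V ≃ Fin n)

lemma exists_mem_greedyAux_rank_le {us : List U} {matched : Finset V} {u : U} {v : V}
    (hu : u ∈ us) (huv : E u v = true) (hv : v ∉ matched)
    (hfree : v ∉ (greedyAux E π us matched).map Prod.snd) :
    ∃ w, (u, w) ∈ greedyAux E π us matched ∧ π w ≤ π v := by
  induction us generalizing matched with
  | nil => simp at hu
  | cons u₀ us ih =>
    rw [greedyAux] at hfree ⊢
    set cand := (Finset.univ.filter fun x => E u₀ x = true ∧ x ∉ matched).image π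
    by_cases hu₀ : u₀ = u
    · subst hu₀
      have hvc : π v ∈ cand := Finset.mem_image_of_mem _ (by simp [huv, hv])
      rw [dif_pos ⟨_, hvc⟩]
      exact ⟨_, List.mem_cons_self, by simpa using cand.min'_le _ hvc⟩
    have hu' : u ∈ us := (List.mem_cons.mp hu).resolve_left (Ne.symm hu₀)
    split_ifs at hfree ⊢ with hc
    · simp only [List.map_cons, List.mem_cons, not_or] at hfree
      obtain ⟨w, hw, hle⟩ := ih hu' (by simp [hfree.1, hv]) hfree.2
      exact ⟨w, List.mem_cons_of_mem _ hw, hle⟩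
    · exact ih hu' hv hfree

lemma exists_mem_greedy_rank_le (σ : U ≃ Fin m) {u : U} {v : V} (huv : E u v = true)
    (hfree : v ∉ (greedy E σ π).map Prod.snd) :
    ∃ w, (u, w) ∈ greedy E σ π ∧ π w ≤ π v :=
  exists_mem_greedyAux_rank_le E π (List.mem_map.mpr ⟨σ u, List.mem_finRange _, by simp⟩)
    huv (Finset.notMem_empty v) hfree

end Greedy

lemma card_filter_le_length_filter_add_card {U V : Type*} [Fintype V] [DecidableEq V]
    (L : List (U × V)) (p : V → Prop) [DecidablePred p] :
    (Finset.univ.filter p).card ≤ (L.filter fun e => p e.2).length +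
      (Finset.univ.filter fun v => p v ∧ v ∉ L.map Prod.snd).card := by
  set matched := ((L.filter fun e => p e.2).map Prod.snd).toFinset
  have hsub : Finset.univ.filter p ⊆
      matched ∪ Finset.univ.filter fun v => p v ∧ v ∉ L.map Prod.snd := by
    intro v hv
    simp only [Finset.mem_filter, Finset.mem_univ, true_and] at hv
    by_cases hvL : v ∈ L.map Prod.snd
    · obtain ⟨e, he, rfl⟩ := List.mem_map.mp hvL
      exact Finset.mem_union_left _ (List.mem_toFinset.mpr
        (List.mem_map_of_mem (List.mem_filter.mpr ⟨he, by simpa using hv⟩)))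
    · exact Finset.mem_union_right _ (Finset.mem_filter.mpr ⟨Finset.mem_univ _, hv, hvL⟩)
  calc (Finset.univ.filter p).card ≤ _ := Finset.card_le_card hsub
    _ ≤ _ := Finset.card_union_le _ _
    _ ≤ _ := by
      gcongr
      exact (List.toFinset_card_le _).trans (List.length_map _).le

theorem card_add_length_filter_le_two_mul {U V : Type*} [Fintype V] (L : List (U × V))
    (μ : V ≃ U) (p : V → Prop) [DecidablePred p]
    (hL : ∀ v, p v → v ∉ L.map Prod.snd → ∃ w, p w ∧ (μ v, w) ∈ L) :
    (Finset.univ.filter p).card + (L.filter fun e => p e.2 ∧ ¬ p (μ.symm e.1)).length ≤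
      2 * (L.filter fun e => p e.2).length := by
  classical
  have hcount := card_filter_le_length_filter_add_card L p
  set internal := L.filter fun e => p e.2 ∧ p (μ.symm e.1)
  set free := Finset.univ.filter fun v => p v ∧ v ∉ L.map Prod.snd
  have hsplit : (L.filter fun e => p e.2).length =
      internal.length + (L.filter fun e => p e.2 ∧ ¬ p (μ.symm e.1)).length := by
    rw [List.length_eq_length_filter_add (fun e => decide (p (μ.symm e.1))),
      List.filter_filter, List.filter_filter]
    congr 3 <;> ext e <;> simp [Bool.and_comm]
  have hfree : free.card ≤ internal.length := by
    have hsub : free.image μ ⊆ (internal.map Prod.fst).toFinset := by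
      simp only [Finset.subset_iff, Finset.mem_image, List.mem_toFinset, List.mem_map,
        forall_exists_index, and_imp]
      rintro _ v hv rfl
      obtain ⟨hv, hvL⟩ := (Finset.mem_filter.mp hv).2
      obtain ⟨w, hw, hvw⟩ := hL v hv hvL
      exact ⟨(μ v, w), List.mem_filter.mpr ⟨hvw, by simp [hw, hv]⟩, rfl⟩
    calc free.card = (free.image μ).card := (Finset.card_image_of_injective _ μ.injective).symm
      _ ≤ (internal.map Prod.fst).toFinset.card := Finset.card_le_card hsub
      _ ≤ internal.length := (List.toFinset_card_le _).trans (List.length_map _).le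
  omega

/-- Here `μ v` is the `M`-partner of `v`, and `ℓ + (k - ℓ)/2 ≤ matched` is stated as
`k + ℓ ≤ 2 * matched`. -/
theorem prefix_matching (n k ℓ : ℕ) (hk : k ≤ n)
    (E : Fin n → Fin n → Bool)
    (σ π : Equiv.Perm (Fin n)) (μ : Equiv.Perm (Fin n))
    (hμ : ∀ v, E (μ v) v = true)
    (hl : ((greedy E σ π).filter
        (fun p => decide (((π p.2 : ℕ) < k) ∧ k ≤ (π (μ.symm p.1) : ℕ)))).length = ℓ) :
    k + ℓ ≤ 2 * ((greedy E σ π).filter (fun p => decide ((π p.2 : ℕ) < k))).length := by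
  have hfree : ∀ v, (π v : ℕ) < k → v ∉ (greedy E σ π).map Prod.snd →
      ∃ w, (π w : ℕ) < k ∧ (μ v, w) ∈ greedy E σ π := by
    intro v hv hvfree
    obtain ⟨w, hw, hle⟩ := exists_mem_greedy_rank_le E π σ (hμ v) hvfree
    exact ⟨w, (Fin.val_le_of_le hle).trans_lt hv, hw⟩
  have hcard : (Finset.univ.filter fun v => (π v : ℕ) < k).card = k := by
    rw [← Finset.card_map π.toEmbedding, Finset.map_filter]
    simp [Fin.card_filter_val_lt, hk]
  have := card_add_length_filter_le_two_mul (greedy E σ π) μ _ hfree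
  simp only [not_lt] at this
  rwa [hcard, hl] at this
end

section
/- For every integer d ≥ 1 there exists a 2d-regular bipartite graph G(U,V;E) with 3d vertices on each side such that for every permutation π of V there exists a permutation σ of U for which the greedy matching M[σ,π] leaves at least d/3 vertices of V unmatched; that is, ρ(G) ≤ 8/9. -/
/-!
Split each side into three blocks of size `d` and join `u` to `v` when they lie in different
blocks. Given `π`, the `d` vertices of rank at least `2d` meet some block `i` in at least `d/3`
vertices. By Hall's theorem the `2d` left vertices outside block `i` can be ordered so that the
`t`-th of them lies outside the block of the vertex of rank `t`; arriving first, they take exactly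
the `2d` lowest-ranked vertices. The left vertices of block `i` arrive last and cannot reach the
high-ranked vertices of block `i`, which therefore stay unmatched.
-/

open Finset

section Greedy

theorem symm_min'_image_mem {V : Type*} {n : ℕ} (π : V ≃ Fin n) {s : Finset V}
    (h : (s.image π).Nonempty) : π.symm ((s.image π).min' h) ∈ s := by
  obtain ⟨v, hv, hπv⟩ := mem_image.mp ((s.image π).min'_mem h)
  rwa [← hπv, π.symm_apply_apply]

variable {U V : Type*} [Fintype V] {n : ℕ}

section Rank

variable (π : V ≃ Fin n)

def rankBelow (k : ℕ) : Finset V := univ.filter (fun v => (π v : ℕ) < k)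

theorem card_rankBelow (k : ℕ) : #(rankBelow π k) = min n k := by
  rw [rankBelow, card_equiv π (t := {r : Fin n | r < k}) (by simp), Fin.card_filter_val_lt]

end Rank

variable [DecidableEq V] (E : U → V → Bool) (π : V ≃ Fin n)

def greedyAuxMatched : List U → Finset V → Finset V
  | [], matched => matched
  | u :: us, matched =>
    let cand := (univ.filter (fun v => E u v = true ∧ v ∉ matched)).image π
    if h : cand.Nonempty then
      greedyAuxMatched us (insert (π.symm (cand.min' h)) matched)
    else
      greedyAuxMatched us matched

theorem length_greedyAux_add_card (l : List U) (m : Finset V) :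
    (greedyAux E π l m).length + #m = #(greedyAuxMatched E π l m) := by
  induction l generalizing m with
  | nil => simp [greedyAux, greedyAuxMatched]
  | cons u us ih =>
    simp only [greedyAux, greedyAuxMatched]
    split
    · rename_i h
      have hnew := (mem_filter.mp (symm_min'_image_mem π h)).2.2
      rw [← ih, card_insert_of_notMem hnew, List.length_cons]
      omega
    · exact ih m

theorem greedyAuxMatched_append (l₁ l₂ : List U) (m : Finset V) :
    greedyAuxMatched E π (l₁ ++ l₂) m =
      greedyAuxMatched E π l₂ (greedyAuxMatched E π l₁ m) := by
  induction l₁ generalizing m with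
  | nil => rfl
  | cons u us ih =>
    simp only [List.cons_append, greedyAuxMatched]
    split <;> exact ih _

theorem greedyAuxMatched_subset {S : Finset V} (l : List U) (m : Finset V)
    (hS : ∀ u ∈ l, ∀ v, E u v = true → v ∈ S) :
    greedyAuxMatched E π l m ⊆ m ∪ S := by
  induction l generalizing m with
  | nil => exact subset_union_left
  | cons u us ih =>
    have hus : ∀ u ∈ us, ∀ v, E u v = true → v ∈ S := fun u' hu' => hS u' (by simp [hu'])
    simp only [greedyAuxMatched]
    split
    · rename_i h
      have hnew := (mem_filter.mp (symm_min'_image_mem π h)).2.1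
      refine (ih _ hus).trans ?_
      rw [insert_union]
      exact insert_subset (mem_union_right _ (hS u (by simp) _ hnew)) subset_rfl
    · exact (ih m hus).trans subset_rfl

theorem insert_symm_rankBelow {k : ℕ} (hk : k < n) :
    insert (π.symm ⟨k, hk⟩) (rankBelow π k) = rankBelow π (k + 1) := by
  ext v
  simp only [rankBelow, mem_insert, mem_filter, mem_univ, true_and, π.eq_symm_apply, Fin.ext_iff]
  omega

theorem greedyAuxMatched_rankBelow (l : List U) (k : ℕ)
    (hl : ∀ t (ht : t < l.length) v, (π v : ℕ) = k + t → E l[t] v = true) :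
    greedyAuxMatched E π l (rankBelow π k) = rankBelow π (k + l.length) := by
  induction l generalizing k with
  | nil => rfl
  | cons u us ih =>
    have hus := ih (k + 1) fun t ht v hv => hl (t + 1) (by simpa using ht) v (by omega)
    rw [List.length_cons, show k + (us.length + 1) = k + 1 + us.length by omega, ← hus]
    simp only [greedyAuxMatched]
    by_cases hk : k < n
    · set cand := (univ.filter (fun v => E u v = true ∧ v ∉ rankBelow π k)).image π
      have hE : E u (π.symm ⟨k, hk⟩) = true := hl 0 (by simp) _ (by simp)
      have hmem : (⟨k, hk⟩ : Fin n) ∈ cand :=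
        mem_image.mpr ⟨_, by simp [rankBelow, hE], π.apply_symm_apply _⟩
      have hmin : cand.min' ⟨_, hmem⟩ = ⟨k, hk⟩ := by
        refine le_antisymm (min'_le _ _ hmem) ((le_min'_iff _ _).mpr fun r hr => ?_)
        obtain ⟨v, hv, rfl⟩ := mem_image.mp hr
        simp only [rankBelow, mem_filter, mem_univ, true_and, not_lt] at hv
        exact hv.2
      rw [dif_pos ⟨_, hmem⟩, hmin, insert_symm_rankBelow]
    · have hall : ∀ j ≥ k, rankBelow π j = univ := fun j hj =>
        eq_univ_of_forall fun v => mem_filter.mpr ⟨mem_univ v, by omega⟩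
      rw [dif_neg, hall k le_rfl, hall (k + 1) (by omega)]
      simp [hall k le_rfl]

theorem length_greedy_le {m : ℕ} (σ : U ≃ Fin m) (k : ℕ) (S : Finset V)
    (hpre : ∀ u, (σ u : ℕ) < k → ∀ v, (π v : ℕ) = σ u → E u v = true)
    (hpost : ∀ u, k ≤ (σ u : ℕ) → ∀ v, E u v = true → v ∈ S) :
    (greedy E σ π).length ≤ #(rankBelow π k ∪ S) := by
  set l := (List.finRange m).map σ.symm
  have hfirst : greedyAuxMatched E π (l.take k) ∅ = rankBelow π (l.take k).length := by
    have h := greedyAuxMatched_rankBelow E π (l.take k) 0 fun t ht v hv => by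
      refine hpre _ ?_ v ?_ <;> simp [l] at ht ⊢ <;> omega
    simpa [rankBelow] using h
  have hrest :=
    greedyAuxMatched_subset E π (S := S) (l.drop k) (greedyAuxMatched E π (l.take k) ∅)
    fun u hu => hpost u (by
      obtain ⟨t, ht, rfl⟩ := List.mem_drop_iff_getElem.mp hu
      simp [l])
  have hcard := length_greedyAux_add_card E π l ∅
  rw [card_empty, add_zero] at hcard
  rw [greedy, hcard, ← List.take_append_drop k l, greedyAuxMatched_append]
  refine card_le_card (hrest.trans (union_subset_union ?_ subset_rfl))
  rw [hfirst]
  exact fun v hv => mem_filter.mpr ⟨mem_univ v, (mem_filter.mp hv).2.trans_le (by simp)⟩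

end Greedy

section Blocks

variable {m d : ℕ}

theorem card_filter_divNat_mem (C : Finset (Fin m)) :
    #{x : Fin (m * d) | x.divNat ∈ C} = #C * d := by
  rw [card_equiv finProdFinEquiv.symm (t := C ×ˢ univ) (by simp), card_product, card_univ,
    Fintype.card_fin]

theorem card_filter_divNat_eq (c : Fin m) : #{x : Fin (m * d) | x.divNat = c} = d := by
  simpa using card_filter_divNat_mem (d := d) {c}

theorem card_filter_divNat_ne (c : Fin m) : #{x : Fin (m * d) | x.divNat ≠ c} = (m - 1) * d := by
  simpa [card_compl] using card_filter_divNat_mem (d := d) {c}ᶜ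

end Blocks

def blockGraph (m d : ℕ) (u v : Fin (m * d)) : Bool := decide (u.divNat ≠ v.divNat)

theorem card_blockGraph_left {m d : ℕ} (u : Fin (m * d)) :
    #{v | blockGraph m d u v = true} = (m - 1) * d := by
  simpa [blockGraph, ne_comm] using card_filter_divNat_ne (d := d) u.divNat

theorem card_blockGraph_right {m d : ℕ} (v : Fin (m * d)) :
    #{u | blockGraph m d u v = true} = (m - 1) * d := by
  simpa [blockGraph] using card_filter_divNat_ne (d := d) v.divNat

section ArrivalOrder

variable {m d : ℕ}

theorem exists_injective_prefix_avoids (hm : 3 ≤ m) (π : Equiv.Perm (Fin (m * d))) (i : Fin m) :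
    ∃ f : Fin (m * d) → Fin (m * d), Function.Injective f ∧
      ∀ r : Fin (m * d), (r : ℕ) < (m - 1) * d →
        (f r).divNat ≠ i ∧ (f r).divNat ≠ (π.symm r).divNat := by
  let slot (r : Fin (m * d)) : Finset (Fin (m * d)) :=
    {u | (r : ℕ) < (m - 1) * d → u.divNat ≠ i ∧ u.divNat ≠ (π.symm r).divNat}
  suffices hall : ∀ A, #A ≤ #(A.biUnion slot) by
    obtain ⟨f, hf, hslot⟩ := (all_card_le_biUnion_card_iff_exists_injective slot).mp hall
    exact ⟨f, hf, fun r => (mem_filter.mp (hslot r)).2⟩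
  -- Hall's condition. If no slot of `A` contains some `u` outside block `i`, every rank in `A` is
  -- early and its vertex lies in `u`'s block, so `#A ≤ d`; yet one early slot contains a block.
  intro A
  obtain rfl | ⟨r₀, hr₀⟩ := A.eq_empty_or_nonempty
  · simp
  set B := A.biUnion slot
  by_cases hlate : ∃ r ∈ A, ¬ (r : ℕ) < (m - 1) * d
  · obtain ⟨r, hr, hlate⟩ := hlate
    have hB : B = univ :=
      eq_univ_of_forall fun u => mem_biUnion.mpr ⟨r, hr, by simp [slot, hlate]⟩
    rw [hB]
    exact card_le_univ A
  push Not at hlate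
  have hA : #A ≤ (m - 1) * d := by
    calc #A ≤ #{r : Fin (m * d) | (r : ℕ) < (m - 1) * d} :=
          card_le_card fun r hr => mem_filter.mpr ⟨mem_univ r, hlate r hr⟩
      _ ≤ (m - 1) * d := Fin.card_filter_val_lt.trans_le (min_le_right _ _)
  by_cases hcover : ∀ u : Fin (m * d), u.divNat ≠ i → u ∈ B
  · calc #A ≤ (m - 1) * d := hA
      _ = #{u : Fin (m * d) | u.divNat ≠ i} := (card_filter_divNat_ne i).symm
      _ ≤ #B := card_le_card fun u hu => hcover u (mem_filter.mp hu).2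
  push Not at hcover
  obtain ⟨u, hui, huB⟩ := hcover
  have hlabel : ∀ r ∈ A, (π.symm r).divNat = u.divNat := fun r hr => by
    by_contra h
    exact huB (mem_biUnion.mpr ⟨r, hr, by simp [slot, hui, Ne.symm h]⟩)
  have hfree : 0 < #({i, u.divNat}ᶜ : Finset (Fin m)) := by
    have := card_le_two (a := i) (b := u.divNat)
    rw [card_compl, Fintype.card_fin]
    omega
  calc #A ≤ #{v : Fin (m * d) | v.divNat = u.divNat} :=
        card_le_card_of_injOn π.symm (fun r hr => by simpa using hlabel r hr)
          π.symm.injective.injOn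
    _ = d := card_filter_divNat_eq _
    _ ≤ #({i, u.divNat}ᶜ : Finset (Fin m)) * d := Nat.le_mul_of_pos_left d hfree
    _ = #{w : Fin (m * d) | w.divNat ∈ ({i, u.divNat}ᶜ : Finset (Fin m))} :=
        (card_filter_divNat_mem _).symm
    _ ≤ #B := card_le_card fun w hw => mem_biUnion.mpr ⟨r₀, hr₀, by
        simp_all [slot]⟩

theorem exists_perm_prefix_avoids (hm : 3 ≤ m) (π : Equiv.Perm (Fin (m * d))) (i : Fin m) :
    ∃ σ : Equiv.Perm (Fin (m * d)),
      (∀ u, (σ u : ℕ) < (m - 1) * d → u.divNat ≠ (π.symm (σ u)).divNat) ∧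
      (∀ u, (m - 1) * d ≤ (σ u : ℕ) → u.divNat = i) := by
  obtain ⟨f, hf, hprefix⟩ := exists_injective_prefix_avoids hm π i
  set σ := (Equiv.ofBijective f (Finite.injective_iff_bijective.mp hf)).symm
  have hσ : ∀ u, f (σ u) = u := (Equiv.ofBijective f _).apply_symm_apply
  refine ⟨σ, fun u hu => by simpa only [hσ] using (hprefix _ hu).2, fun u hu => ?_⟩
  by_contra hui
  -- `f` maps the `(m - 1) * d` early ranks onto the `(m - 1) * d` vertices outside block `i`
  have hsurj := surjOn_of_injOn_of_card_le (s := {r : Fin (m * d) | (r : ℕ) < (m - 1) * d})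
    (t := {u : Fin (m * d) | u.divNat ≠ i}) f
    (fun r hr => mem_filter.mpr ⟨mem_univ _, (hprefix r (mem_filter.mp hr).2).1⟩) hf.injOn
    (by rw [card_filter_divNat_ne, Fin.card_filter_val_lt]; exact le_min (by gcongr; omega) le_rfl)
  obtain ⟨r, hr, hfr⟩ := hsurj (mem_filter.mpr ⟨mem_univ u, hui⟩)
  have hσu : σ u = r := hf (by rw [hσ, hfr])
  exact (mem_filter.mp (mem_coe.mp hr)).2.not_ge (hσu ▸ hu)

end ArrivalOrder

section Count

variable {m d : ℕ}

def lateInBlock (π : Equiv.Perm (Fin (m * d))) (i : Fin m) : Finset (Fin (m * d)) :=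
  {v | v.divNat = i ∧ (m - 1) * d ≤ (π v : ℕ)}

theorem exists_block_many_late (hm : 0 < m) (π : Equiv.Perm (Fin (m * d))) :
    ∃ i : Fin m, d ≤ m * #(lateInBlock π i) := by
  have hlate : #(rankBelow π ((m - 1) * d))ᶜ = d := by
    have hmd : (m - 1) * d + d = m * d := by
      rw [← Nat.succ_mul, Nat.succ_eq_add_one, Nat.sub_add_cancel hm]
    rw [card_compl, card_rankBelow, Fintype.card_fin]
    omega
  have hsum : ∑ i : Fin m, #(lateInBlock π i) = d := by
    refine Eq.trans ?_ hlate
    rw [card_eq_sum_card_fiberwise (f := Fin.divNat) fun _ _ => mem_univ _]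
    congr! 2 with i
    ext v
    simp [lateInBlock, rankBelow, and_comm]
  obtain ⟨i, -, hi⟩ := exists_le_of_sum_le (univ_nonempty_iff.mpr ⟨⟨0, hm⟩⟩)
    (f := fun _ => d) (g := fun i => m * #(lateInBlock π i))
    (by simp [← mul_sum, hsum])
  exact ⟨i, hi⟩

theorem exists_perm_length_greedy_add_card_lateInBlock_le (hm : 3 ≤ m)
    (π : Equiv.Perm (Fin (m * d))) (i : Fin m) : ∃ σ : Equiv.Perm (Fin (m * d)),
      (greedy (blockGraph m d) σ π).length + #(lateInBlock π i) ≤ m * d := by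
  obtain ⟨σ, hpre, hpost⟩ := exists_perm_prefix_avoids hm π i
  refine ⟨σ, ?_⟩
  let S : Finset (Fin (m * d)) := {v | v.divNat ≠ i}
  have hgreedy := length_greedy_le (blockGraph m d) π σ ((m - 1) * d) S
    (fun u hu v hv => by
      rw [← Fin.ext_iff] at hv
      simpa [blockGraph, ← hv] using hpre u hu)
    (fun u hu v huv => by
      simpa [S, blockGraph, hpost u hu, ne_comm] using huv)
  have hcompl : (rankBelow π ((m - 1) * d) ∪ S)ᶜ = lateInBlock π i := by
    ext v
    simp only [rankBelow, S, lateInBlock, mem_compl, mem_union, mem_filter, mem_univ, true_and]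
    omega
  have hsplit := card_add_card_compl (rankBelow π ((m - 1) * d) ∪ S)
  rw [hcompl, Fintype.card_fin] at hsplit
  omega

end Count

theorem regular_upper_bound_general (d : ℕ) :
    ∃ E : Fin (3 * d) → Fin (3 * d) → Bool,
      (∀ u, (Finset.univ.filter (fun v => E u v = true)).card = 2 * d) ∧
      (∀ v, (Finset.univ.filter (fun u => E u v = true)).card = 2 * d) ∧
      ∀ π : Equiv.Perm (Fin (3 * d)), ∃ σ : Equiv.Perm (Fin (3 * d)),
        d ≤ 3 * (3 * d - (greedy E σ π).length) := by
  refine ⟨blockGraph 3 d, card_blockGraph_left, card_blockGraph_right, fun π => ?_⟩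
  obtain ⟨i, hi⟩ := exists_block_many_late (by norm_num) π
  obtain ⟨σ, hσ⟩ := exists_perm_length_greedy_add_card_lateInBlock_le le_rfl π i
  exact ⟨σ, by omega⟩

/-- For every `d ≥ 1` there is a `2d`-regular bipartite graph with `3d` vertices
on each side such that for every permutation `π` of `V` some permutation `σ` of `U`
makes the greedy matching leave at least `d/3` vertices of `V` unmatched
(so `ρ(G) ≤ 8/9`). -/
theorem regular_upper_bound (d : ℕ) (hd : 1 ≤ d) :
    ∃ E : Fin (3 * d) → Fin (3 * d) → Bool,
      (∀ u, (Finset.univ.filter (fun v => E u v = true)).card = 2 * d) ∧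
      (∀ v, (Finset.univ.filter (fun u => E u v = true)).card = 2 * d) ∧
      ∀ π : Equiv.Perm (Fin (3 * d)), ∃ σ : Equiv.Perm (Fin (3 * d)),
        d ≤ 3 * (3 * d - (greedy E σ π).length) :=
  regular_upper_bound_general d
end

section
/- In the graph G with U = U1 ∪ U2 ∪ U3, V = V1 ∪ V2 ∪ V3 (each part of size d), complete bipartite between Ui and Vj for i ≠ j and no edges between Ui and Vi, for every set S ⊆ V with |S| = 2d there is a perfect matching between U1 ∪ U2 and S. -/
/-- In the graph with parts `U_i = {i} × Fin d`, `V_j = {j} × Fin d`, complete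
bipartite between `U_i` and `V_j` for `i ≠ j` and no edges within `i = j`: for
every `S ⊆ V` of size `2d` there is a perfect matching between `U1 ∪ U2` and `S`. -/
theorem hall_step_three_parts (d : ℕ)
    (S : Finset (Fin 3 × Fin d)) (hS : S.card = 2 * d) :
    ∃ f : (Fin 3 × Fin d) → (Fin 3 × Fin d),
      Set.InjOn f {u | u.1 ≠ 2} ∧
      (∀ u : Fin 3 × Fin d, u.1 ≠ 2 → f u ∈ S) ∧
      (∀ v ∈ S, ∃ u : Fin 3 × Fin d, u.1 ≠ 2 ∧ f u = v) ∧
      (∀ u : Fin 3 × Fin d, u.1 ≠ 2 → u.1 ≠ (f u).1) := by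
  classical
  set t : Fin 2 × Fin d → Finset (Fin 3 × Fin d) :=
    fun u => S.filter (fun v => v.1 ≠ u.1.castSucc) with ht
  -- row cardinality bound
  have hrow : ∀ i : Fin 3, (S.filter (fun v => v.1 = i)).card ≤ d := by
    intro i
    calc (S.filter (fun v => v.1 = i)).card
        ≤ (({i} : Finset (Fin 3)) ×ˢ (Finset.univ : Finset (Fin d))).card := by
          apply Finset.card_le_card
          intro v hv
          simp only [Finset.mem_filter] at hv
          rw [Finset.mem_product]
          exact ⟨by simp [hv.2], Finset.mem_univ _⟩
      _ = d := by simp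
  have htcard : ∀ u : Fin 2 × Fin d, d ≤ (t u).card := by
    intro u
    have h1 := Finset.card_filter_add_card_filter_not
      (s := S) (p := fun v => v.1 = u.1.castSucc)
    have h2 := hrow u.1.castSucc
    have : (S.filter (fun v => ¬ v.1 = u.1.castSucc)).card ≥ d := by omega
    simpa [ht] using this
  have hall : ∀ A : Finset (Fin 2 × Fin d), A.card ≤ (A.biUnion t).card := by
    intro A
    by_cases hA : A = ∅
    · simp [hA]
    obtain ⟨a, ha⟩ := Finset.nonempty_iff_ne_empty.2 hA
    by_cases hsame : ∀ b ∈ A, b.1 = a.1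
    · -- all in one row, A.card ≤ d ≤ |t a|
      have hAcard : A.card ≤ d := by
        calc A.card ≤ (({a.1} : Finset (Fin 2)) ×ˢ (Finset.univ : Finset (Fin d))).card := by
              apply Finset.card_le_card
              intro b hb
              rw [Finset.mem_product]
              exact ⟨by simp [hsame b hb], Finset.mem_univ _⟩
          _ = d := by simp
      calc A.card ≤ d := hAcard
        _ ≤ (t a).card := htcard a
        _ ≤ (A.biUnion t).card := Finset.card_le_card (Finset.subset_biUnion_of_mem t ha)
    · push_neg at hsame
      obtain ⟨b, hb, hba⟩ := hsame
      have hsub : S ⊆ A.biUnion t := by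
        intro v hv
        rcases ne_or_eq v.1 a.1.castSucc with h | h
        · exact Finset.mem_biUnion.2 ⟨a, ha, by simp [ht, hv, h]⟩
        · refine Finset.mem_biUnion.2 ⟨b, hb, ?_⟩
          simp only [ht, Finset.mem_filter]
          refine ⟨hv, ?_⟩
          rw [h]
          intro hc
          exact hba (Fin.castSucc_injective _ hc.symm)
      have hAcard : A.card ≤ 2 * d := by
        calc A.card ≤ Fintype.card (Fin 2 × Fin d) := Finset.card_le_univ A
          _ = 2 * d := by simp
      calc A.card ≤ 2 * d := hAcard
        _ = S.card := hS.symm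
        _ ≤ (A.biUnion t).card := Finset.card_le_card hsub
  obtain ⟨g, hginj, hgmem⟩ := (Finset.all_card_le_biUnion_card_iff_exists_injective t).1 hall
  have hgS : ∀ x, g x ∈ S := fun x => (Finset.mem_filter.1 (hgmem x)).1
  have hgne : ∀ x, (g x).1 ≠ x.1.castSucc := fun x => (Finset.mem_filter.1 (hgmem x)).2
  have hlt2 : ∀ i : Fin 3, i ≠ 2 → (i : ℕ) < 2 := by
    intro i hi
    have : (i : ℕ) ≠ 2 := Fin.val_ne_of_ne hi
    omega
  refine ⟨fun u => if h : u.1 ≠ 2 then g (u.1.castLT (hlt2 u.1 h), u.2) else u, ?_, ?_, ?_, ?_⟩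
  · intro u hu w hw hfuw
    simp only [Set.mem_setOf_eq] at hu hw
    simp only [dif_pos hu, dif_pos hw] at hfuw
    have := hginj hfuw
    rw [Prod.mk.injEq] at this
    obtain ⟨h1, h2⟩ := this
    have h1' : u.1 = w.1 := Fin.ext (by simpa using congrArg Fin.val h1)
    exact Prod.ext h1' h2
  · intro u hu
    simp only [dif_pos hu]
    exact hgS _
  · intro v hv
    have himg : Finset.image g Finset.univ = S := by
      apply Finset.eq_of_subset_of_card_le
      · intro x hx
        obtain ⟨y, _, rfl⟩ := Finset.mem_image.1 hx
        exact hgS y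
      · rw [hS, Finset.card_image_of_injective _ hginj]
        simp
    rw [← himg] at hv
    obtain ⟨x, _, hx⟩ := Finset.mem_image.1 hv
    have hne : (x.1.castSucc : Fin 3) ≠ 2 := by
      simp [Fin.ext_iff]
      omega
    refine ⟨(x.1.castSucc, x.2), hne, ?_⟩
    simp only [dif_pos hne]
    rw [← hx]
    congr 1
  · intro u hu
    simp only [dif_pos hu]
    intro hc
    apply hgne (u.1.castLT (hlt2 u.1 hu), u.2)
    rw [← hc]
    simp
end

section
/- Let H = (v1, u1, v2, u2, ..., vn, un, v1) be a Hamiltonian cycle of a bipartite graph G(U,V;E) alternating between V = {v1,...,vn} and U = {u1,...,un}. Then for any set S ⊆ V whose elements form k maximal blocks of consecutive V-vertices along the cycle, the neighborhood N(S) in G contains at least |S| + k vertices of U (assuming k < n, i.e., S ≠ V). -/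
/-- Hamiltonian-cycle expansion: index both sides of the cycle
`(v_1,u_1,v_2,u_2,…,v_n,u_n,v_1)` by `ZMod n`, so `u_i` is adjacent to `v_i` and
`v_{i+1}`. For any `S ⊆ V` (with `S ≠ V`) consisting of `k` maximal blocks of
cyclically consecutive `V`-vertices (`k` = number of `i ∈ S` with `i - 1 ∉ S`),
the neighborhood of `S` has at least `|S| + k` vertices. -/
theorem hamiltonian_block_expansion (n : ℕ) [NeZero n]
    (E : ZMod n → ZMod n → Bool)
    (hcycle : ∀ i : ZMod n, E i i = true ∧ E i (i + 1) = true)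
    (S : Finset (ZMod n)) (hS : S ≠ Finset.univ) :
    S.card + (S.filter (fun i => i - 1 ∉ S)).card ≤
      (Finset.univ.filter (fun u => ∃ v ∈ S, E u v = true)).card := by
  classical
  set N := Finset.univ.filter (fun u => ∃ v ∈ S, E u v = true) with hN
  have hSN : S ⊆ N := by
    intro i hi
    simp only [hN, Finset.mem_filter, Finset.mem_univ, true_and]
    exact ⟨i, hi, (hcycle i).1⟩
  set B := (S.filter (fun i => i - 1 ∉ S)).image (· - 1) with hB
  have hBN : B ⊆ N := by
    intro u hu
    simp only [hB, Finset.mem_image, Finset.mem_filter] at hu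
    obtain ⟨i, ⟨hi, _⟩, rfl⟩ := hu
    simp only [hN, Finset.mem_filter, Finset.mem_univ, true_and]
    refine ⟨i, hi, ?_⟩
    have := (hcycle (i - 1)).2
    simpa using this
  have hdisj : Disjoint S B := by
    rw [Finset.disjoint_right]
    intro u hu
    simp only [hB, Finset.mem_image, Finset.mem_filter] at hu
    obtain ⟨i, ⟨hi, hni⟩, rfl⟩ := hu
    exact hni
  have hinj : Function.Injective (fun x : ZMod n => x - 1) := by
    intro a b h
    have := congrArg (· + 1) h; simpa [sub_add_cancel] using this
  have hBcard : B.card = (S.filter (fun i => i - 1 ∉ S)).card :=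
    Finset.card_image_of_injective _ hinj
  calc S.card + (S.filter (fun i => i - 1 ∉ S)).card
      = (S ∪ B).card := by rw [Finset.card_union_of_disjoint hdisj, hBcard]
    _ ≤ N.card := Finset.card_le_card (Finset.union_subset hSN hBN)
end

section
/- Consider the bipartite graph G(U,V;E) with U = U1 ∪ U2, V = V1 ∪ V2, |U1|=|U2|=|V1|=|V2|=n/2, whose edges are a perfect matching between U1 and V1, a perfect matching between U2 and V2, and a complete bipartite graph between U1 and V2. For any permutation π of V, let S ⊆ V1 be the set of v ∈ V1 such that strictly more vertices of V2 than vertices of V1 precede v (inclusive of v counted on the V1 side) — formally, such that there exist |{v' ∈ V1 : π(v') ≤ π(v)}| distinct vertices of V2 with rank below π(v). Then there exists a permutation σ of U under which the greedy matching leaves every vertex of S unmatched; hence the greedy matching has size at most n - |S|. -/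
section Greedy

variable {U V : Type*} [Fintype V] [DecidableEq V] {n : ℕ} (E : U → V → Bool) (π : V ≃ Fin n)

theorem greedyAux_cons_cases (u : U) (M : Finset V) :
    (∃ c, E u c ∧ c ∉ M ∧ (∀ w, E u w → w ∉ M → π c ≤ π w) ∧
        ∀ us, greedyAux E π (u :: us) M = (u, c) :: greedyAux E π us (insert c M)) ∨
      ((∀ w, E u w → w ∈ M) ∧ ∀ us, greedyAux E π (u :: us) M = greedyAux E π us M) := by
  set cand := (Finset.univ.filter (fun v => E u v = true ∧ v ∉ M)).image π with hcand
  have mem_cand : ∀ w, π w ∈ cand ↔ E u w ∧ w ∉ M := by simp [hcand]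
  by_cases h : cand.Nonempty
  · left
    obtain ⟨c, hc, hc_eq⟩ := Finset.mem_image.mp (cand.min'_mem h)
    simp only [Finset.mem_filter, Finset.mem_univ, true_and] at hc
    refine ⟨c, hc.1, hc.2, fun w hw hwM => ?_, ?_⟩
    · exact hc_eq ▸ cand.min'_le _ ((mem_cand w).mpr ⟨hw, hwM⟩)
    · intro us
      rw [greedyAux, dif_pos h, ← hc_eq, π.symm_apply_apply]
  · right
    refine ⟨fun w hw => ?_, fun us => by rw [greedyAux, dif_neg h]⟩
    by_contra hwM
    exact h ⟨π w, (mem_cand w).mpr ⟨hw, hwM⟩⟩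

theorem length_greedyAux_le (L : List U) (M : Finset V) :
    (greedyAux E π L M).length ≤ L.length := by
  induction L generalizing M with
  | nil => simp [greedyAux]
  | cons u us ih =>
    rcases greedyAux_cons_cases E π u M with ⟨c, -, -, -, h⟩ | ⟨-, h⟩
    · exact (h us).symm ▸ Nat.succ_le_succ (ih _)
    · exact (h us).symm ▸ (ih M).trans (Nat.le_succ _)

theorem greedyAux_append (l₁ l₂ : List U) (M : Finset V) :
    greedyAux E π (l₁ ++ l₂) M = greedyAux E π l₁ M ++
      greedyAux E π l₂ (M ∪ ((greedyAux E π l₁ M).map Prod.snd).toFinset) := by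
  induction l₁ generalizing M with
  | nil => simp [greedyAux]
  | cons u us ih =>
    rcases greedyAux_cons_cases E π u M with ⟨c, -, -, -, h⟩ | ⟨-, h⟩
    · simp only [List.cons_append, h, ih, List.map_cons, List.toFinset_cons, Finset.insert_union,
        Finset.union_insert]
    · simp only [List.cons_append, h, ih]

theorem exists_adj_of_mem_greedyAux {L : List U} {M : Finset V} {v : V}
    (hv : v ∈ (greedyAux E π L M).map Prod.snd) : ∃ u ∈ L, E u v := by
  induction L generalizing M with
  | nil => simp [greedyAux] at hv
  | cons u us ih =>
    rcases greedyAux_cons_cases E π u M with ⟨c, hc, -, -, h⟩ | ⟨-, h⟩ <;>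
      simp only [h, List.map_cons, List.mem_cons] at hv
    · rcases hv with rfl | hv
      · exact ⟨u, List.mem_cons_self, hc⟩
      · obtain ⟨u', hu', he⟩ := ih hv
        exact ⟨u', List.mem_cons_of_mem _ hu', he⟩
    · obtain ⟨u', hu', he⟩ := ih hv
      exact ⟨u', List.mem_cons_of_mem _ hu', he⟩

theorem nodup_greedyAux (L : List U) (M : Finset V) :
    ((greedyAux E π L M).map Prod.snd).Nodup ∧
      ∀ v ∈ (greedyAux E π L M).map Prod.snd, v ∉ M := by
  induction L generalizing M with
  | nil => simp [greedyAux]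
  | cons u us ih =>
    rcases greedyAux_cons_cases E π u M with ⟨c, -, hcM, -, h⟩ | ⟨-, h⟩
    · obtain ⟨hnd, hfresh⟩ := ih (insert c M)
      simp only [h, List.map_cons, List.nodup_cons, List.mem_cons, forall_eq_or_imp]
      exact ⟨⟨fun hc => hfresh c hc (Finset.mem_insert_self _ _), hnd⟩, hcM,
        fun v hv hvM => hfresh v hv (Finset.mem_insert_of_mem hvM)⟩
    · rw [h]
      exact ih M

theorem card_toFinset_snd_greedyAux_le (L : List U) (M : Finset V) :
    ((greedyAux E π L M).map Prod.snd).toFinset.card ≤ L.length :=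
  (List.toFinset_card_le _).trans ((List.length_map _).trans_le (length_greedyAux_le E π L M))

theorem notMem_greedyAux_of_forall_not_adj (pre rest : List U) (u : U) (M : Finset V) {v : V}
    (hv : ∀ u' ∈ pre ++ rest, E u' v = false)
    (hcard : M.card + pre.length < (Finset.univ.filter fun w => E u w ∧ π w < π v).card) :
    v ∉ (greedyAux E π (pre ++ u :: rest) M).map Prod.snd := by
  set M' := M ∪ ((greedyAux E π pre M).map Prod.snd).toFinset
  have hM' : M'.card < (Finset.univ.filter fun w => E u w ∧ π w < π v).card :=
    (Finset.card_union_le _ _).trans_lt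
      (lt_of_le_of_lt (Nat.add_le_add_left (card_toFinset_snd_greedyAux_le E π pre M) _) hcard)
  obtain ⟨w, hw, hwM'⟩ := Finset.exists_mem_notMem_of_card_lt_card hM'
  simp only [Finset.mem_filter, Finset.mem_univ, true_and] at hw
  have notMem_of_forall_not_adj : ∀ l, (∀ u' ∈ l, E u' v = false) → ∀ N : Finset V,
      v ∉ (greedyAux E π l N).map Prod.snd := fun l hl N hmem => by
    obtain ⟨u', hu', he⟩ := exists_adj_of_mem_greedyAux E π hmem
    simp [hl u' hu'] at he
  rw [greedyAux_append, List.map_append, List.mem_append, not_or]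
  refine ⟨notMem_of_forall_not_adj pre (fun u' hu' => hv u' (List.mem_append_left _ hu')) M, ?_⟩
  rcases greedyAux_cons_cases E π u M' with ⟨c, -, -, hmin, h⟩ | ⟨hfull, -⟩
  · rw [h, List.map_cons, List.mem_cons, not_or]
    refine ⟨fun hvc => ?_,
      notMem_of_forall_not_adj rest (fun u' hu' => hv u' (List.mem_append_right _ hu')) _⟩
    have hcw := hmin w hw.1 hwM'
    rw [hvc] at hw
    exact absurd hw.2 (not_lt.mpr hcw)
  · exact absurd (hfull w hw.1) hwM'

theorem length_greedyAux_le_card_sub (L : List U) (M : Finset V) {S : Finset V}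
    (hS : ∀ v ∈ S, v ∉ (greedyAux E π L M).map Prod.snd) :
    (greedyAux E π L M).length ≤ Fintype.card V - S.card := by
  rw [← Finset.card_compl, ← List.length_map Prod.snd,
    ← List.toFinset_card_of_nodup (nodup_greedyAux E π L M).1]
  exact Finset.card_le_card fun v hv =>
    Finset.mem_compl.mpr fun hvS => hS v hvS (List.mem_toFinset.mp hv)

end Greedy

theorem exists_equiv_finRange_map_symm_eq {α : Type*} [DecidableEq α] {n : ℕ} (L : List α)
    (hnd : L.Nodup) (hmem : ∀ x, x ∈ L) (hlen : L.length = n) :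
    ∃ σ : α ≃ Fin n, (List.finRange n).map σ.symm = L :=
  ⟨(List.Nodup.getEquivOfForallMemList L hnd hmem).symm.trans (finCongr hlen), by
    apply List.ext_getElem <;> simp [hlen, List.Nodup.getEquivOfForallMemList]⟩

section AdversarialOrder

variable {α : Type*} {n : ℕ} (π : α ≃ Fin n) (p : α → Bool)

def adversarialOrder : List α :=
  ((List.finRange n).map π.symm).filter p ++ ((List.finRange n).map π.symm).filter (fun x => !p x)

theorem adversarialOrder_perm : (adversarialOrder π p).Perm ((List.finRange n).map π.symm) :=
  List.filter_append_perm _ _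

theorem nodup_adversarialOrder : (adversarialOrder π p).Nodup :=
  (adversarialOrder_perm π p).nodup_iff.mpr ((List.nodup_finRange n).map π.symm.injective)

theorem mem_adversarialOrder (x : α) : x ∈ adversarialOrder π p :=
  (adversarialOrder_perm π p).mem_iff.mpr
    (List.mem_map.mpr ⟨π x, List.mem_finRange _, π.symm_apply_apply x⟩)

theorem length_adversarialOrder : (adversarialOrder π p).length = n := by
  rw [(adversarialOrder_perm π p).length_eq, List.length_map, List.length_finRange]

theorem adversarialOrder_eq_append {v : α} (hv : p v) :
    ∃ pre rest, adversarialOrder π p = pre ++ v :: rest ∧ ∀ u ∈ pre, p u ∧ π u < π v := by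
  have hsorted : (((List.finRange n).map π.symm).filter p).Pairwise (fun a b => π a < π b) :=
    (List.pairwise_map.mpr ((List.pairwise_lt_finRange n).imp (by simpa using ·))).sublist
      List.filter_sublist
  obtain ⟨pre, post, hsplit⟩ := List.append_of_mem (List.mem_filter.mpr
    ⟨List.mem_map.mpr ⟨π v, List.mem_finRange _, π.symm_apply_apply v⟩, hv⟩)
  refine ⟨pre, post ++ _, by rw [adversarialOrder, hsplit, List.append_assoc, List.cons_append],
    fun u hu => ⟨?_, ?_⟩⟩
  · exact (List.mem_filter.mp (hsplit ▸ List.mem_append_left _ hu)).2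
  · exact (List.pairwise_append.mp (hsplit ▸ hsorted)).2.2 u hu v List.mem_cons_self

end AdversarialOrder

theorem notMem_greedyAux_adversarialOrder {m : ℕ}
    {E : (Fin 2 × Fin m) → (Fin 2 × Fin m) → Bool}
    (hE : ∀ u v, E u v = true ↔ (u = v ∨ (u.1 = 0 ∧ v.1 = 1))) (π : (Fin 2 × Fin m) ≃ Fin (2 * m))
    {v : Fin 2 × Fin m} (hv0 : v.1 = 0)
    (hvS : (Finset.univ.filter (fun v' : Fin 2 × Fin m =>
        v'.1 = 0 ∧ (π v' : ℕ) ≤ (π v : ℕ))).card ≤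
      (Finset.univ.filter (fun w : Fin 2 × Fin m => w.1 = 1 ∧ (π w : ℕ) < (π v : ℕ))).card) :
    v ∉ (greedyAux E π (adversarialOrder π (fun x => decide (x.1 = 0))) ∅).map Prod.snd := by
  obtain ⟨pre, rest, hsplit, hpre⟩ :=
    adversarialOrder_eq_append π (fun x => decide (x.1 = 0)) (decide_eq_true hv0)
  have hnd := nodup_adversarialOrder π (fun x => decide (x.1 = 0))
  rw [hsplit] at hnd ⊢
  apply notMem_greedyAux_of_forall_not_adj
  · intro u hu
    have huv : u ≠ v := fun h => (List.nodup_cons.mp (List.nodup_middle.mp hnd)).1 (h ▸ hu)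
    rw [Bool.eq_false_iff, Ne, hE, hv0]
    simp [huv]
  · have hnd' : (pre ++ [v]).Nodup := hnd.sublist (by simp)
    have hsub : (pre ++ [v]).toFinset ⊆ Finset.univ.filter (fun v' : Fin 2 × Fin m =>
        v'.1 = 0 ∧ (π v' : ℕ) ≤ (π v : ℕ)) := by
      intro u hu
      simp only [List.mem_toFinset, List.mem_append, List.mem_singleton] at hu
      simp only [Finset.mem_filter, Finset.mem_univ, true_and]
      rcases hu with hu | rfl
      · exact ⟨of_decide_eq_true (hpre u hu).1, (hpre u hu).2.le⟩
      · exact ⟨hv0, le_rfl⟩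
    calc Finset.card ∅ + pre.length < (pre ++ [v]).length := by simp
      _ = (pre ++ [v]).toFinset.card := (List.toFinset_card_of_nodup hnd').symm
      _ ≤ _ := Finset.card_le_card hsub
      _ ≤ _ := hvS
      _ ≤ _ := Finset.card_le_card fun w hw => by
        simp only [Finset.mem_filter, Finset.mem_univ, true_and] at hw ⊢
        exact ⟨(hE v w).mpr (Or.inr ⟨hv0, hw.1⟩), hw.2⟩

/-- The bad graph for a random permutation: `U = V = Fin 2 × Fin m`, with
`U1 = {0} × Fin m`, `U2 = {1} × Fin m` (similarly `V1`, `V2`); edges are the perfect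
matchings `U1–V1`, `U2–V2` and the complete bipartite graph `U1–V2`. For any
ranking `π` of `V`, letting `S` be the set of `v ∈ V1` such that there are at least
`|{v' ∈ V1 : π(v') ≤ π(v)}|` vertices of `V2` with rank below `π(v)`, some arrival
order `σ` leaves every vertex of `S` unmatched, so the greedy matching has size at
most `n - |S|` (where `n = 2m`). -/
theorem random_perm_bad_graph (m : ℕ)
    (E : (Fin 2 × Fin m) → (Fin 2 × Fin m) → Bool)
    (hE : ∀ u v, E u v = true ↔ (u = v ∨ (u.1 = 0 ∧ v.1 = 1)))
    (π : (Fin 2 × Fin m) ≃ Fin (2 * m))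
    (S : Finset (Fin 2 × Fin m))
    (hS : S = Finset.univ.filter (fun v : Fin 2 × Fin m => v.1 = 0 ∧
      (Finset.univ.filter (fun v' : Fin 2 × Fin m =>
          v'.1 = 0 ∧ (π v' : ℕ) ≤ (π v : ℕ))).card ≤
      (Finset.univ.filter (fun w : Fin 2 × Fin m =>
          w.1 = 1 ∧ (π w : ℕ) < (π v : ℕ))).card)) :
    ∃ σ : (Fin 2 × Fin m) ≃ Fin (2 * m),
      (∀ v ∈ S, v ∉ (greedy E σ π).map Prod.snd) ∧
      (greedy E σ π).length ≤ 2 * m - S.card := by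
  set p : Fin 2 × Fin m → Bool := fun x => decide (x.1 = 0)
  obtain ⟨σ, hσ⟩ := exists_equiv_finRange_map_symm_eq (adversarialOrder π p)
    (nodup_adversarialOrder π p) (mem_adversarialOrder π p) (length_adversarialOrder π p)
  have hgreedy : greedy E σ π = greedyAux E π (adversarialOrder π p) ∅ := by rw [greedy, hσ]
  have hunmatched : ∀ v ∈ S, v ∉ (greedy E σ π).map Prod.snd := by
    intro v hv
    rw [hS, Finset.mem_filter] at hv
    rw [hgreedy]
    exact notMem_greedyAux_adversarialOrder hE π hv.2.1 hv.2.2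
  refine ⟨σ, hunmatched, ?_⟩
  have hlen := length_greedyAux_le_card_sub E π _ _ (hgreedy ▸ hunmatched)
  rwa [← hgreedy, Fintype.card_prod, Fintype.card_fin, Fintype.card_fin] at hlen
end

section
/- Let G(U,V;E) be a bipartite graph, π a permutation of V, and S ⊆ V. Let S' ⊆ S be the set of the α·n lowest-ranked (under π) vertices of S, let v' be the highest-ranked vertex of S', and let P = {v ∈ V \ S' : π(v) < π(v')}. If |P| < |N(S')|, then for every permutation σ of U, the greedy matching M[σ,π] matches at least one vertex of S'. -/
section GreedyAux

variable {U V : Type*} [Fintype V] [DecidableEq V] {n : ℕ} (E : U → V → Bool) (π : V ≃ Fin n)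

theorem greedyAux_cons_of_exists {u : U} {us : List U} {M : Finset V}
    (h : ∃ v, E u v = true ∧ v ∉ M) :
    ∃ w, w ∉ M ∧ (∀ v, E u v = true → v ∉ M → π w ≤ π v) ∧
      greedyAux E π (u :: us) M = (u, w) :: greedyAux E π us (insert w M) := by
  set cand := (Finset.univ.filter (fun v => E u v = true ∧ v ∉ M)).image π
  obtain ⟨v, hv⟩ := h
  have hne : cand.Nonempty := ⟨π v, Finset.mem_image_of_mem π (by simpa using hv)⟩
  obtain ⟨w, hw, hπw⟩ := Finset.mem_image.mp (cand.min'_mem hne)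
  refine ⟨w, (Finset.mem_filter.mp hw).2.2, fun v hE hM => ?_, ?_⟩
  · exact hπw ▸ cand.min'_le _ (Finset.mem_image_of_mem π (by simp [hE, hM]))
  · rw [greedyAux, dif_pos hne, ← hπw, Equiv.symm_apply_apply]

theorem greedyAux_cons_of_forall {u : U} {us : List U} {M : Finset V}
    (h : ¬∃ v, E u v = true ∧ v ∉ M) :
    greedyAux E π (u :: us) M = greedyAux E π us M := by
  rw [greedyAux, dif_neg]
  rintro ⟨_, hv⟩
  obtain ⟨v, hv, -⟩ := Finset.mem_image.mp hv
  exact h ⟨v, by simpa using hv⟩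

theorem snd_notMem_of_mem_greedyAux {l : List U} {M : Finset V} {p : U × V}
    (hp : p ∈ greedyAux E π l M) : p.2 ∉ M := by
  induction l generalizing M with
  | nil => simp [greedyAux] at hp
  | cons u us ih =>
    by_cases h : ∃ v, E u v = true ∧ v ∉ M
    · obtain ⟨w, hwM, -, heq⟩ := greedyAux_cons_of_exists E π (us := us) h
      rw [heq] at hp
      rcases List.mem_cons.mp hp with rfl | hp
      · exact hwM
      · exact fun h => ih hp (Finset.mem_insert_of_mem h)
    · rw [greedyAux_cons_of_forall E π h] at hp
      exact ih hp

theorem nodup_map_snd_greedyAux (l : List U) (M : Finset V) :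
    ((greedyAux E π l M).map Prod.snd).Nodup := by
  induction l generalizing M with
  | nil => simp [greedyAux]
  | cons u us ih =>
    by_cases h : ∃ v, E u v = true ∧ v ∉ M
    · obtain ⟨w, -, -, heq⟩ := greedyAux_cons_of_exists E π (us := us) h
      rw [heq, List.map_cons, List.nodup_cons]
      refine ⟨fun hw => ?_, ih _⟩
      obtain ⟨p, hp, rfl⟩ := List.mem_map.mp hw
      exact snd_notMem_of_mem_greedyAux E π hp (Finset.mem_insert_self _ _)
    · rw [greedyAux_cons_of_forall E π h]
      exact ih M

theorem exists_mem_greedyAux_of_adj_of_unmatched {l : List U} {M : Finset V} {u : U} {v : V}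
    (hu : u ∈ l) (hE : E u v = true) (hvM : v ∉ M)
    (hv : v ∉ (greedyAux E π l M).map Prod.snd) :
    ∃ w, (u, w) ∈ greedyAux E π l M ∧ π w ≤ π v := by
  induction l generalizing M with
  | nil => simp at hu
  | cons x xs ih =>
    by_cases h : ∃ v, E x v = true ∧ v ∉ M
    · obtain ⟨w, -, hmin, heq⟩ := greedyAux_cons_of_exists E π (us := xs) h
      rw [heq] at hv ⊢
      simp only [List.map_cons, List.mem_cons, not_or] at hv
      rcases List.mem_cons.mp hu with rfl | hu
      · exact ⟨w, List.mem_cons_self, hmin v hE hvM⟩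
      · obtain ⟨w', hw', hle⟩ := ih hu (by simp [hvM, hv.1]) hv.2
        exact ⟨w', List.mem_cons_of_mem _ hw', hle⟩
    · rw [greedyAux_cons_of_forall E π h] at hv ⊢
      have hux : u ≠ x := by rintro rfl; exact h ⟨v, hE, hvM⟩
      exact ih ((List.mem_cons.mp hu).resolve_left hux) hvM hv

end GreedyAux

section Greedy

variable {U V : Type*} [Fintype V] [DecidableEq V] {m n : ℕ}
  (E : U → V → Bool) (π : V ≃ Fin n) (σ : U ≃ Fin m)

theorem nodup_map_snd_greedy : ((greedy E σ π).map Prod.snd).Nodup :=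
  nodup_map_snd_greedyAux E π _ _

theorem exists_mem_greedy_of_adj_of_unmatched {u : U} {v : V} (hE : E u v = true)
    (hv : v ∉ (greedy E σ π).map Prod.snd) :
    ∃ w, (u, w) ∈ greedy E σ π ∧ π w < π v := by
  obtain ⟨w, hw, hle⟩ := exists_mem_greedyAux_of_adj_of_unmatched E π
    (by simpa using ⟨σ u, σ.symm_apply_apply u⟩) hE (Finset.notMem_empty v) hv
  refine ⟨w, hw, hle.lt_of_ne fun h => hv ?_⟩
  exact π.injective h ▸ List.mem_map_of_mem hw

end Greedy

theorem safety_sufficient_condition_general {U V : Type*}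
    [Fintype U] [Fintype V] [DecidableEq V] {m n : ℕ}
    (E : U → V → Bool) (π : V ≃ Fin n)
    (S' : Finset V)
    (v' : V) (hv'max : ∀ v ∈ S', π v ≤ π v')
    (hP : (Finset.univ.filter (fun v => v ∉ S' ∧ π v < π v')).card <
          (Finset.univ.filter (fun u => ∃ v ∈ S', E u v = true)).card) :
    ∀ σ : U ≃ Fin m, ∃ v ∈ S', v ∈ (greedy E σ π).map Prod.snd := by
  intro σ
  by_contra! hunmatched
  refine hP.not_ge (Finset.card_le_card_of_forall_subsingleton
    (fun u w => (u, w) ∈ greedy E σ π) (fun u hu => ?_) fun w _ u₁ hu₁ u₂ hu₂ => ?_)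
  · obtain ⟨v, hv, hE⟩ := (Finset.mem_filter.mp hu).2
    obtain ⟨w, hw, hlt⟩ := exists_mem_greedy_of_adj_of_unmatched E π σ hE (hunmatched v hv)
    have hwS' : w ∉ S' := fun h => hunmatched w h (List.mem_map_of_mem hw)
    exact ⟨w, Finset.mem_filter.mpr ⟨Finset.mem_univ w, hwS', hlt.trans_le (hv'max v hv)⟩, hw⟩
  · exact congrArg Prod.fst
      (List.inj_on_of_nodup_map (nodup_map_snd_greedy E π σ) hu₁.2 hu₂.2 rfl)

/-- Safety lemma: let `S' ⊆ S` be the set of lowest-ranked (under `π`) vertices of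
`S`, let `v'` be the highest-ranked vertex of `S'`, and let
`P = {v ∉ S' : π(v) < π(v')}`. If `|P| < |N(S')|`, then for every arrival order `σ`
the greedy matching matches at least one vertex of `S'`. -/
theorem safety_sufficient_condition {U V : Type*}
    [Fintype U] [Fintype V] [DecidableEq U] [DecidableEq V] {m n : ℕ}
    (E : U → V → Bool) (π : V ≃ Fin n)
    (S S' : Finset V) (hsub : S' ⊆ S) (hne : S'.Nonempty)
    (hlow : ∀ v ∈ S', ∀ w ∈ S, w ∉ S' → π v < π w)
    (v' : V) (hv' : v' ∈ S') (hv'max : ∀ v ∈ S', π v ≤ π v')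
    (hP : (Finset.univ.filter (fun v => v ∉ S' ∧ π v < π v')).card <
          (Finset.univ.filter (fun u => ∃ v ∈ S', E u v = true)).card) :
    ∀ σ : U ≃ Fin m, ∃ v ∈ S', v ∈ (greedy E σ π).map Prod.snd :=
  safety_sufficient_condition_general E π S' v' hv'max hP
end
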